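/- arXiv:2106.12306 — 5 statements merged into one kernel-verified Lean document; each statement's English description precedes it below -/
import Mathlib

section
/- If an n × n array of nonnegative integers has the property that its 2n line sums (the n row sums together with the n column sums) are exactly the integers 0, 1, 2, ..., 2n−1 in some order, then n is even. -/
/-!
Every entry of the array is counted once among the row sums and once among the column sums, so
`0 + 1 + ⋯ + (2n - 1) = n (2n - 1)` is twice the total of the array. As `2n - 1` is odd, `n` is even.
-/

open Finset

theorem Multiset.sum_range_eq_finset_sum (n : ℕ) :
    (Multiset.range n).sum = ∑ i ∈ Finset.range n, i := by
  rw [← range_val, Finset.sum, Multiset.map_id']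

theorem even_sum_range_two_mul_iff (n : ℕ) : Even (∑ i ∈ range (2 * n), i) ↔ Even n := by
  have hgauss : ∑ i ∈ range (2 * n), i = n * (2 * n - 1) := by
    have := sum_range_id_mul_two (2 * n)
    rw [mul_comm, mul_assoc] at this
    exact Nat.eq_of_mul_eq_mul_left two_pos this
  rcases n.eq_zero_or_pos with rfl | hn
  · simp
  · have hodd : ¬Even (2 * n - 1) := Nat.not_even_iff_odd.mpr ⟨n - 1, by omega⟩
    rw [hgauss, Nat.even_mul]
    tauto

theorem sum_rowSums_add_sum_colSums {ι κ M : Type*} [Fintype ι] [Fintype κ] [AddCommMonoid M]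
    (f : ι × κ → M) :
    ((univ.val.map fun i => ∑ j, f (i, j)) + (univ.val.map fun j => ∑ i, f (i, j))).sum =
      ∑ x, f x + ∑ x, f x := by
  rw [Multiset.sum_add, Fintype.sum_prod_type]
  exact congrArg₂ (· + ·) rfl sum_comm

/-- If the multiset of the `n` row sums and `n` column sums of an `n × n` array of
nonnegative integers is exactly `{0, 1, ..., 2n-1}`, then `n` is even. -/
theorem square_consecutive_line_sums_even (n : ℕ) (f : Fin n × Fin n → ℕ)
    (h : ((Finset.univ : Finset (Fin n)).val.map fun i => ∑ j, f (i, j)) +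
         ((Finset.univ : Finset (Fin n)).val.map fun j => ∑ i, f (i, j)) =
         Multiset.range (2 * n)) :
    Even n := by
  have htotal := congrArg Multiset.sum h
  rw [sum_rowSums_add_sum_colSums, Multiset.sum_range_eq_finset_sum] at htotal
  exact (even_sum_range_two_mul_iff n).mp ⟨_, htotal.symm⟩
end

section
/- For every even positive integer n, there exists an n × n array of nonnegative integers whose 2n line sums (row sums and column sums) are exactly the integers 0, 1, 2, ..., 2n−1 in some order. -/
/-!
Pair the target sums as `{2i, 2i + 1}` and give row `i` one of them and column `i` the other:
with `2i` on the diagonal and a `1` at `(i, i + 1)` for every even `i`, row `i` sums to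
`2i + [i even]` and column `i` to `2i + [i odd]`. Since `n` is even, the last row is odd and
needs no entry beyond the border.
-/

open Finset

theorem Fin.univ_val_map_coe {n : ℕ} {α : Type*} (g : ℕ → α) :
    (univ : Finset (Fin n)).val.map (fun i : Fin n => g i) = (Multiset.range n).map g := by
  have hval : (univ : Finset (Fin n)).val.map Fin.val = Multiset.range n := by
    rw [← Fin.valEmbedding_apply, ← Finset.map_val, Fin.map_valEmbedding_univ,
      Nat.Iio_eq_range, Finset.range_val]
  rw [← hval, Multiset.map_map]
  rfl

theorem Multiset.map_range_add_map_range_eq_range_two_mul {n : ℕ} {a b : ℕ → ℕ}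
    (hab : ∀ i < n, a i + b i = 1) :
    (range n).map (fun i => 2 * i + a i) + (range n).map (fun i => 2 * i + b i) =
      range (2 * n) := by
  induction n with
  | zero => simp
  | succ n ih =>
    rw [show 2 * (n + 1) = 2 * n + 1 + 1 by ring, range_succ, range_succ, range_succ,
      map_cons, map_cons, cons_add, add_cons, ih fun i hi => hab i (Nat.lt_succ_of_lt hi)]
    rcases Nat.add_eq_one_iff.mp (hab n n.lt_succ_self) with ⟨ha, hb⟩ | ⟨ha, hb⟩
    · rw [ha, hb, cons_swap]
      rfl
    · rw [ha, hb]
      rfl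

def bidiag (i j : ℕ) : ℕ :=
  (if j = i then 2 * i else 0) + (if j = i + 1 then (i + 1) % 2 else 0)

theorem sum_range_bidiag_row {n i : ℕ} (hn : Even n) (hi : i < n) :
    ∑ j ∈ range n, bidiag i j = 2 * i + (i + 1) % 2 := by
  simp only [bidiag, sum_add_distrib, sum_ite_eq', mem_range, if_pos hi]
  obtain ⟨k, rfl⟩ := hn
  split_ifs <;> omega

theorem sum_range_bidiag_col {n j : ℕ} (hj : j < n) :
    ∑ i ∈ range n, bidiag i j = 2 * j + j % 2 := by
  have hshift : ∑ i ∈ range n, (if j = i + 1 then (i + 1) % 2 else 0) = j % 2 :=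
    calc _ = ∑ k ∈ range (n + 1), (if j = k then k % 2 else 0) := by
          rw [sum_range_succ']
          simp
      _ = j % 2 := by rw [sum_ite_eq, if_pos (mem_range.2 (by omega))]
  simp only [bidiag, sum_add_distrib, hshift, sum_ite_eq, mem_range, if_pos hj]

theorem exists_square_consecutive_line_sums_general (n : ℕ) (he : Even n) :
    ∃ f : Fin n × Fin n → ℕ,
      ((Finset.univ : Finset (Fin n)).val.map fun i => ∑ j, f (i, j)) +
      ((Finset.univ : Finset (Fin n)).val.map fun j => ∑ i, f (i, j)) =
      Multiset.range (2 * n) := by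
  refine ⟨fun p => bidiag p.1 p.2, ?_⟩
  have hcol (j : ℕ) : ∑ i : Fin n, bidiag i j = ∑ i ∈ range n, bidiag i j :=
    Fin.sum_univ_eq_sum_range (bidiag · j) n
  simp only [Fin.sum_univ_eq_sum_range (bidiag _), hcol]
  rw [Fin.univ_val_map_coe (fun i => ∑ j ∈ range n, bidiag i j),
    Fin.univ_val_map_coe (fun j => ∑ i ∈ range n, bidiag i j)]
  calc _ = (Multiset.range n).map (fun i => 2 * i + (i + 1) % 2) +
        (Multiset.range n).map (fun j => 2 * j + j % 2) := by
        congr 1 <;> refine Multiset.map_congr rfl fun i hi => ?_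
        · exact sum_range_bidiag_row he (Multiset.mem_range.1 hi)
        · exact sum_range_bidiag_col (Multiset.mem_range.1 hi)
    _ = Multiset.range (2 * n) :=
        Multiset.map_range_add_map_range_eq_range_two_mul fun i _ => by omega

/-- For every even positive integer `n`, there is an `n × n` array of nonnegative integers
whose `n` row sums together with `n` column sums are exactly `{0, 1, ..., 2n-1}`. -/
theorem exists_square_consecutive_line_sums (n : ℕ) (hn : 0 < n) (he : Even n) :
    ∃ f : Fin n × Fin n → ℕ,
      ((Finset.univ : Finset (Fin n)).val.map fun i => ∑ j, f (i, j)) +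
      ((Finset.univ : Finset (Fin n)).val.map fun j => ∑ i, f (i, j)) =
      Multiset.range (2 * n) :=
  exists_square_consecutive_line_sums_general n he
end

section
/- If there exists a Sarvate–Beam cube of order n, then for every positive integer m there exists a Sarvate–Beam cube of order mn. -/
/-!
Cut the cube of order `mn` into an `m × m × m` array of blocks of order `n`. Block `(a, b, c)`
holds `f` when `c = a + b` in `Fin m` (so every line of blocks meets exactly one copy of `f`), plus
`3n² · H(a, b, c)` times a permutation cube `Z` of order `n`. A line of the big cube then sums to
a line sum of `f` plus `3n²` times a line sum of `H`. If, in each direction, the line sums of the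
`m`-cube `H` are `0, …, m² - 1`, the line sums of the big cube are the blocks `3n²q + [0, 3n²)`
for `q < m²`, i.e. exactly `0, …, 3(mn)² - 1`. Such an `H` is built from carries of addition
in `Fin m`.
-/

/-- The multiset of all `3n²` axis-parallel line sums of a cube `f`. -/
def cubeLineSums (n : ℕ) (f : Fin n × Fin n × Fin n → ℕ) : Multiset ℕ :=
  ((Finset.univ : Finset (Fin n × Fin n)).val.map fun p => ∑ k, f (p.1, p.2, k)) +
  ((Finset.univ : Finset (Fin n × Fin n)).val.map fun p => ∑ j, f (p.1, j, p.2)) +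
  ((Finset.univ : Finset (Fin n × Fin n)).val.map fun p => ∑ i, f (i, p.1, p.2))

/-- A Sarvate–Beam cube of order `n`: line sums are exactly `0, 1, ..., 3n²-1`. -/
def IsSBC (n : ℕ) (f : Fin n × Fin n × Fin n → ℕ) : Prop :=
  cubeLineSums n f = Multiset.range (3 * n ^ 2)

open Finset

namespace SarvateBeam

section Multisets

variable {α β δ : Type*} [Fintype α] [Fintype β]

theorem map_univ_comp_equiv (e : α ≃ β) (F : β → δ) :
    Multiset.map (F ∘ e) univ.val = Multiset.map F univ.val := by
  rw [← Multiset.map_map, Multiset.map_univ_val_equiv]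

theorem map_univ_prod (F : α × β → δ) :
    Multiset.map F univ.val =
      (univ : Finset α).val.bind fun a => Multiset.map (fun b => F (a, b)) univ.val := by
  rw [← univ_product_univ, product_val]
  change (univ.val.bind fun a => univ.val.map (Prod.mk a)).map F = _
  simp [Multiset.map_bind, Multiset.map_map]

theorem map_univ_eq_bind (c : ℕ) (u : β × β → ℕ) (v : α × α → ℕ) (φ : (α × β) × (α × β) → ℕ)
    (hφ : ∀ p, φ p = u (p.1.2, p.2.2) + c * v (p.1.1, p.2.1)) :
    Multiset.map φ univ.val =
      (Multiset.map v univ.val).bind fun q => (Multiset.map u univ.val).map (· + c * q) := by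
  rw [← map_univ_comp_equiv (Equiv.prodProdProdComm α α β β), map_univ_prod, Multiset.bind_map]
  refine Multiset.bind_congr fun P _ => ?_
  rw [Multiset.map_map]
  exact Multiset.map_congr rfl fun Q _ => hφ _

theorem map_univ_eq_range {N : ℕ} (F : α → ℕ) (e : α ≃ Fin N) (hF : ∀ x, F x = e x) :
    Multiset.map F univ.val = Multiset.range N := by
  rw [← map_univ_comp_equiv e.symm]
  simp only [Function.comp_def, hF, Equiv.apply_symm_apply]
  rw [Fin.univ_val_map, List.ofFn_eq_map, List.map_coe_finRange_eq_range]
  rfl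

theorem range_mul (a b : ℕ) :
    Multiset.range (a * b) =
      (Multiset.range a).bind fun q => (Multiset.range b).map (· + b * q) := by
  induction a with
  | zero => simp
  | succ a ih =>
    rw [Nat.succ_mul, Multiset.range_add, Multiset.range_succ, Multiset.cons_bind, ih, add_comm]
    congr 1
    exact Multiset.map_congr rfl fun r _ => by ring

end Multisets

section Lines

variable {α β γ : Type*} [Fintype α] [Fintype β] [Fintype γ]

def rowSum (f : α × α × α → ℕ) (p : α × α) : ℕ := ∑ k, f (p.1, p.2, k)

def colSum (f : α × α × α → ℕ) (p : α × α) : ℕ := ∑ j, f (p.1, j, p.2)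

def pillarSum (f : α × α × α → ℕ) (p : α × α) : ℕ := ∑ i, f (i, p.1, p.2)

def lineSums (f : α × α × α → ℕ) : Multiset ℕ :=
  Multiset.map (rowSum f) univ.val + Multiset.map (colSum f) univ.val +
    Multiset.map (pillarSum f) univ.val

theorem cubeLineSums_eq_lineSums (n : ℕ) (f : Fin n × Fin n × Fin n → ℕ) :
    cubeLineSums n f = lineSums f := rfl

def reindex (e : α ≃ γ) (f : α × α × α → ℕ) : γ × γ × γ → ℕ :=
  fun x => f (e.symm x.1, e.symm x.2.1, e.symm x.2.2)

theorem lineSums_reindex (e : α ≃ γ) (f : α × α × α → ℕ) :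
    lineSums (reindex e f) = lineSums f := by
  have reindexed : ∀ L' : γ × γ → ℕ, ∀ L : α × α → ℕ, (∀ p, L' p = L ((e.prodCongr e).symm p)) →
      Multiset.map L' univ.val = Multiset.map L univ.val := fun L' L h => by
    rw [← map_univ_comp_equiv (e.prodCongr e).symm]
    exact congrArg (Multiset.map · _) (funext h)
  simp only [lineSums]
  congr 2 <;> exact reindexed _ _ fun _ => Fintype.sum_equiv e.symm _ _ fun _ => rfl

def cubeProd (F : α × α × α → ℕ) (G : β × β × β → ℕ) : (α × β) × (α × β) × (α × β) → ℕ :=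
  fun x => F (x.1.1, x.2.1.1, x.2.2.1) * G (x.1.2, x.2.1.2, x.2.2.2)

theorem rowSum_cubeProd (F : α × α × α → ℕ) (G : β × β × β → ℕ) (p : (α × β) × (α × β)) :
    rowSum (cubeProd F G) p = rowSum F (p.1.1, p.2.1) * rowSum G (p.1.2, p.2.2) := by
  simp only [rowSum, cubeProd, Fintype.sum_prod_type, Finset.sum_mul_sum]

theorem colSum_cubeProd (F : α × α × α → ℕ) (G : β × β × β → ℕ) (p : (α × β) × (α × β)) :
    colSum (cubeProd F G) p = colSum F (p.1.1, p.2.1) * colSum G (p.1.2, p.2.2) := by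
  simp only [colSum, cubeProd, Fintype.sum_prod_type, Finset.sum_mul_sum]

theorem pillarSum_cubeProd (F : α × α × α → ℕ) (G : β × β × β → ℕ) (p : (α × β) × (α × β)) :
    pillarSum (cubeProd F G) p = pillarSum F (p.1.1, p.2.1) * pillarSum G (p.1.2, p.2.2) := by
  simp only [pillarSum, cubeProd, Fintype.sum_prod_type, Finset.sum_mul_sum]

def IsPermutationCube (f : α × α × α → ℕ) : Prop :=
  ∀ p, rowSum f p = 1 ∧ colSum f p = 1 ∧ pillarSum f p = 1

def addCube (G : Type*) [AddGroup G] [DecidableEq G] : G × G × G → ℕ :=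
  fun x => if x.1 + x.2.1 = x.2.2 then 1 else 0

theorem isPermutationCube_addCube (G : Type*) [AddGroup G] [Fintype G] [DecidableEq G] :
    IsPermutationCube (addCube G) := by
  refine fun p => ⟨?_, ?_, ?_⟩
  · simp [rowSum, addCube]
  · simp only [colSum, addCube, ← eq_neg_add_iff_add_eq]
    simp
  · simp only [pillarSum, addCube, ← eq_sub_iff_add_eq]
    simp

def inflate (A H : α × α × α → ℕ) (Z : β × β × β → ℕ) (c : ℕ) (F : β × β × β → ℕ) :
    (α × β) × (α × β) × (α × β) → ℕ :=
  fun x => cubeProd A F x + c * cubeProd H Z x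

variable {A H : α × α × α → ℕ} {Z : β × β × β → ℕ}

theorem rowSum_inflate (hA : IsPermutationCube A) (hZ : IsPermutationCube Z) (c : ℕ)
    (F : β × β × β → ℕ) (p : (α × β) × (α × β)) :
    rowSum (inflate A H Z c F) p = rowSum F (p.1.2, p.2.2) + c * rowSum H (p.1.1, p.2.1) := by
  calc rowSum (inflate A H Z c F) p = rowSum (cubeProd A F) p + c * rowSum (cubeProd H Z) p := by
        simp only [rowSum, inflate, sum_add_distrib, mul_sum]
    _ = _ := by rw [rowSum_cubeProd, rowSum_cubeProd, (hA _).1, (hZ _).1, one_mul, mul_one]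

theorem colSum_inflate (hA : IsPermutationCube A) (hZ : IsPermutationCube Z) (c : ℕ)
    (F : β × β × β → ℕ) (p : (α × β) × (α × β)) :
    colSum (inflate A H Z c F) p = colSum F (p.1.2, p.2.2) + c * colSum H (p.1.1, p.2.1) := by
  calc colSum (inflate A H Z c F) p = colSum (cubeProd A F) p + c * colSum (cubeProd H Z) p := by
        simp only [colSum, inflate, sum_add_distrib, mul_sum]
    _ = _ := by rw [colSum_cubeProd, colSum_cubeProd, (hA _).2.1, (hZ _).2.1, one_mul, mul_one]

theorem pillarSum_inflate (hA : IsPermutationCube A) (hZ : IsPermutationCube Z) (c : ℕ)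
    (F : β × β × β → ℕ) (p : (α × β) × (α × β)) :
    pillarSum (inflate A H Z c F) p =
      pillarSum F (p.1.2, p.2.2) + c * pillarSum H (p.1.1, p.2.1) := by
  calc pillarSum (inflate A H Z c F) p =
        pillarSum (cubeProd A F) p + c * pillarSum (cubeProd H Z) p := by
        simp only [pillarSum, inflate, sum_add_distrib, mul_sum]
    _ = _ := by
        rw [pillarSum_cubeProd, pillarSum_cubeProd, (hA _).2.2, (hZ _).2.2, one_mul, mul_one]

theorem lineSums_inflate (hA : IsPermutationCube A) (hZ : IsPermutationCube Z) (c : ℕ)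
    (F : β × β × β → ℕ) {S : Multiset ℕ} (hrow : Multiset.map (rowSum H) univ.val = S)
    (hcol : Multiset.map (colSum H) univ.val = S)
    (hpillar : Multiset.map (pillarSum H) univ.val = S) :
    lineSums (inflate A H Z c F) = S.bind fun q => (lineSums F).map (· + c * q) := by
  simp only [lineSums, Multiset.map_add, Multiset.bind_add]
  rw [map_univ_eq_bind c _ _ _ (rowSum_inflate hA hZ c F), hrow,
    map_univ_eq_bind c _ _ _ (colSum_inflate hA hZ c F), hcol,
    map_univ_eq_bind c _ _ _ (pillarSum_inflate hA hZ c F), hpillar]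

end Lines

section Carry

variable {m : ℕ}

/-- The carry of the addition `x + y` in `Fin m`. -/
def carry (x y : Fin m) : ℕ := if m ≤ (x : ℕ) + y then 1 else 0

theorem carry_comm (x y : Fin m) : carry x y = carry y x := by
  simp only [carry, add_comm]

theorem sum_carry_right (x : Fin m) : ∑ y, carry x y = x := by
  unfold carry
  rw [Fin.sum_univ_eq_sum_range (fun y => if m ≤ (x : ℕ) + y then 1 else 0), ← sum_filter]
  have : (range m).filter (fun y => m ≤ (x : ℕ) + y) = Ico (m - x) m := by
    ext y
    simp only [mem_filter, mem_Ico, mem_range]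
    omega
  rw [this, sum_const, smul_eq_mul, mul_one, Nat.card_Ico]
  omega

theorem sum_carry_left (y : Fin m) : ∑ x, carry x y = y := by
  simp only [carry_comm _ y, sum_carry_right]

variable [NeZero m]

theorem sum_carry_add_left (x a : Fin m) : ∑ y, carry x (a + y) = x :=
  (Fintype.sum_equiv (Equiv.addLeft a) _ (carry x) fun _ => rfl).trans (sum_carry_right x)

theorem sum_carry_add_right (x a : Fin m) : ∑ y, carry x (y + a) = x :=
  (Fintype.sum_equiv (Equiv.addRight a) _ (carry x) fun _ => rfl).trans (sum_carry_right x)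

variable (m) in
/-- The line sums are `b + m a` along rows, `(a + c) + m a` along columns and `b + m (b + c)`
along pillars, so in each direction they run once through the two-digit base-`m` numerals. -/
def carryCube : Fin m × Fin m × Fin m → ℕ :=
  fun x => carry x.2.1 (x.1 + x.2.2) + m * carry x.1 (x.2.1 + x.2.2)

theorem map_rowSum_carryCube :
    Multiset.map (rowSum (carryCube m)) univ.val = Multiset.range (m * m) :=
  map_univ_eq_range _ finProdFinEquiv fun p => by
    simp [rowSum, carryCube, sum_add_distrib, ← mul_sum, sum_carry_add_left]

theorem map_colSum_carryCube :
    Multiset.map (colSum (carryCube m)) univ.val = Multiset.range (m * m) :=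
  map_univ_eq_range _ ((Equiv.prodShear (Equiv.refl _) Equiv.addLeft).trans finProdFinEquiv)
    fun p => by
      simp [colSum, carryCube, sum_add_distrib, ← mul_sum, sum_carry_left, sum_carry_add_right]

theorem map_pillarSum_carryCube :
    Multiset.map (pillarSum (carryCube m)) univ.val = Multiset.range (m * m) :=
  map_univ_eq_range _ (((Equiv.prodShear (Equiv.refl _) Equiv.addLeft).trans
    (Equiv.prodComm _ _)).trans finProdFinEquiv) fun p => by
      simp [pillarSum, carryCube, sum_add_distrib, ← mul_sum, sum_carry_add_right, sum_carry_left]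

end Carry

end SarvateBeam

/-- If a Sarvate–Beam cube of order `n` exists, then one of order `m * n` exists
for every positive integer `m`. -/
theorem sbc_multiply (n : ℕ) (h : ∃ f, IsSBC n f) (m : ℕ) (hm : 0 < m) :
    ∃ g, IsSBC (m * n) g := by
  open SarvateBeam in
  obtain ⟨f, hf⟩ := h
  rcases Nat.eq_zero_or_pos n with rfl | hn
  · rw [mul_zero]
    exact ⟨f, hf⟩
  have : NeZero m := NeZero.of_pos hm
  have : NeZero n := NeZero.of_pos hn
  refine ⟨reindex finProdFinEquiv
    (inflate (addCube (Fin m)) (carryCube m) (addCube (Fin n)) (3 * n ^ 2) f), ?_⟩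
  rw [IsSBC, cubeLineSums_eq_lineSums, lineSums_reindex,
    lineSums_inflate (isPermutationCube_addCube _) (isPermutationCube_addCube _) _ _
      map_rowSum_carryCube map_colSum_carryCube map_pillarSum_carryCube,
    ← cubeLineSums_eq_lineSums, hf, ← range_mul]
  congr 1
  ring
end

section
/- For every positive integer n with n ≠ 2, there exists an idempotent Latin square of order n, i.e., a Latin square L with L(i,i) = i for all i. -/
/-!
When `2` is invertible, `(x, y) ↦ midpoint x y` is an idempotent Latin square; on `ZMod n` this
covers every odd `n`. For even `n ≥ 4`, the cells `(x, x + 1)` of the square of odd order `n - 1`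
form a transversal off the diagonal, and prolonging along it adds one symbol and keeps the
diagonal.
-/

open Function

section LatinSquare

variable {α β : Type*}

structure IsLatinSquare (L : α × α → α) : Prop where
  bijective_row : ∀ i, Bijective fun j => L (i, j)
  bijective_col : ∀ j, Bijective fun i => L (i, j)

variable (α) in
def HasIdempotentLatinSquare : Prop :=
  ∃ L : α × α → α, IsLatinSquare L ∧ ∀ i, L (i, i) = i

variable {L : α × α → α}

theorem IsLatinSquare.comp_swap (hL : IsLatinSquare L) : IsLatinSquare (L ∘ Prod.swap) :=
  ⟨hL.bijective_col, hL.bijective_row⟩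

theorem IsLatinSquare.map_equiv (hL : IsLatinSquare L) (e : α ≃ β) :
    IsLatinSquare fun p : β × β => e (L (e.symm p.1, e.symm p.2)) :=
  ⟨fun i => e.bijective.comp ((hL.bijective_row (e.symm i)).comp e.symm.bijective),
    fun j => e.bijective.comp ((hL.bijective_col (e.symm j)).comp e.symm.bijective)⟩

theorem HasIdempotentLatinSquare.of_equiv (h : HasIdempotentLatinSquare α) (e : α ≃ β) :
    HasIdempotentLatinSquare β := by
  obtain ⟨L, hL, hdiag⟩ := h
  exact ⟨_, hL.map_equiv e, fun i => by simp [hdiag]⟩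

theorem hasIdempotentLatinSquare_of_isEmpty [IsEmpty α] : HasIdempotentLatinSquare α :=
  ⟨Prod.fst, ⟨isEmptyElim, isEmptyElim⟩, isEmptyElim⟩

end LatinSquare

section Prolongation

variable {α : Type*} [DecidableEq α]

/-- Prolongation along the transversal `{(i, σ i)}`: each of its cells receives the new symbol
`none`, and the symbol it displaces moves to the new column (in row `i`) and to the new row
(in column `σ i`). -/
def prolong (L : α × α → α) (σ : α ≃ α) : Option α × Option α → Option α
  | (some i, some j) => if j = σ i then none else some (L (i, j))
  | (some i, none) => some (L (i, σ i))
  | (none, some j) => some (L (σ.symm j, j))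
  | (none, none) => none

variable {L : α × α → α} {σ : α ≃ α}

theorem prolong_comp_swap :
    prolong L σ ∘ Prod.swap = prolong (L ∘ Prod.swap) σ.symm := by
  funext p
  rcases p with ⟨_ | i, _ | j⟩ <;> simp [prolong, Equiv.eq_symm_apply, eq_comm]

theorem bijective_row_prolong [Finite α] (hL : IsLatinSquare L)
    (hσ : Bijective fun i => L (i, σ i)) (i : Option α) :
    Bijective fun j => prolong L σ (i, j) := by
  rw [← Finite.injective_iff_bijective]
  have htrans : Injective fun j => L (σ.symm j, j) := by
    simpa [comp_def] using (hσ.comp σ.symm.bijective).injective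
  rcases i with _ | i
  · rintro (_ | a) (_ | b) h <;> simp only [prolong, reduceCtorEq, Option.some.injEq] at h
    · rfl
    · rw [htrans h]
  · have hrow := (hL.bijective_row i).injective
    rintro (_ | a) (_ | b) h <;> simp only [prolong] at h
    · rfl
    · split_ifs at h with hb
      exact absurd (hrow (Option.some.inj h)).symm hb
    · split_ifs at h with ha
      exact absurd (hrow (Option.some.inj h)) ha
    · split_ifs at h with ha hb
      · rw [ha, hb]
      · rw [hrow (Option.some.inj h)]

theorem IsLatinSquare.prolong [Finite α] (hL : IsLatinSquare L)
    (hσ : Bijective fun i => L (i, σ i)) : IsLatinSquare (prolong L σ) where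
  bijective_row := bijective_row_prolong hL hσ
  bijective_col j := by
    have hσ' : Bijective fun j => (L ∘ Prod.swap) (j, σ.symm j) := by
      simpa [comp_def] using hσ.comp σ.symm.bijective
    simpa [← prolong_comp_swap] using bijective_row_prolong hL.comp_swap hσ' j

theorem prolong_self (hdiag : ∀ i, L (i, i) = i) (hσ : ∀ i, σ i ≠ i) (i : Option α) :
    prolong L σ (i, i) = i := by
  rcases i with _ | i
  · rfl
  · simp [prolong, (hσ i).symm, hdiag]

end Prolongation

section Midpoint

variable {V P : Type*} [AddCommGroup V] [AddTorsor V P]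

theorem isLatinSquare_midpoint (R : Type*) [Ring R] [Invertible (2 : R)] [Module R V] :
    IsLatinSquare fun p : P × P => midpoint R p.1 p.2 := by
  have hrow (x : P) : Bijective fun y => midpoint R x y :=
    bijective_iff_has_inverse.mpr ⟨fun z => Equiv.pointReflection z x,
      fun y => midpoint_eq_iff.mp rfl, fun z => midpoint_pointReflection_right z x⟩
  exact ⟨hrow, fun y => by simpa only [midpoint_comm _ y] using hrow y⟩

theorem hasIdempotentLatinSquare_of_invertible_two (R : Type*) [Ring R] [Invertible (2 : R)]
    [Module R V] : HasIdempotentLatinSquare P :=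
  ⟨_, isLatinSquare_midpoint (V := V) R, midpoint_self R⟩

theorem hasIdempotentLatinSquare_option_of_invertible_two (R : Type*) [Ring R]
    [Invertible (2 : R)] [Module R V] [Finite P] [Nontrivial V] :
    HasIdempotentLatinSquare (Option P) := by
  classical
  obtain ⟨v, hv⟩ := exists_ne (0 : V)
  have htrans : Bijective fun x : P => midpoint R x (Equiv.constVAdd P v x) := by
    have hmid (x : P) : midpoint R x (v +ᵥ x) = midpoint R 0 v +ᵥ x := by
      simpa using (midpoint_vadd_midpoint (R := R) (0 : V) v x x).symm
    simpa only [Equiv.coe_constVAdd, hmid] using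
      (Equiv.constVAdd P (midpoint R (0 : V) v)).bijective
  have hfree (x : P) : Equiv.constVAdd P v x ≠ x := fun h =>
    hv (by simpa using congrArg (· -ᵥ x) h)
  exact ⟨_, (isLatinSquare_midpoint R).prolong htrans, prolong_self (midpoint_self R) hfree⟩

end Midpoint

theorem ZMod.isUnit_two_of_odd {m : ℕ} (hm : Odd m) : IsUnit (2 : ZMod m) := by
  simpa using (ZMod.isUnit_iff_coprime 2 m).mpr (Nat.coprime_two_left.mpr hm)

theorem hasIdempotentLatinSquare_fin_of_odd {n : ℕ} (hn : Odd n) :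
    HasIdempotentLatinSquare (Fin n) := by
  have : NeZero n := ⟨hn.pos.ne'⟩
  let := (ZMod.isUnit_two_of_odd hn).invertible
  exact (hasIdempotentLatinSquare_of_invertible_two (V := ZMod n) (ZMod n)).of_equiv
    (ZMod.finEquiv n).symm.toEquiv

theorem hasIdempotentLatinSquare_fin_succ_of_odd {m : ℕ} (hm : Odd m) (hm1 : m ≠ 1) :
    HasIdempotentLatinSquare (Fin (m + 1)) := by
  have : NeZero m := ⟨hm.pos.ne'⟩
  have : Fact (1 < m) := ⟨by have := hm.pos; omega⟩
  let := (ZMod.isUnit_two_of_odd hm).invertible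
  exact (hasIdempotentLatinSquare_option_of_invertible_two (V := ZMod m) (ZMod m)).of_equiv
    ((Equiv.optionCongr (ZMod.finEquiv m).symm.toEquiv).trans (finSuccEquiv m).symm)

theorem exists_idempotent_latin_square_general (n : ℕ) (hn2 : n ≠ 2) :
    ∃ L : Fin n × Fin n → Fin n,
      (∀ i, Function.Bijective fun j => L (i, j)) ∧
      (∀ j, Function.Bijective fun i => L (i, j)) ∧
      (∀ i, L (i, i) = i) := by
  suffices HasIdempotentLatinSquare (Fin n) by
    obtain ⟨L, ⟨hrow, hcol⟩, hdiag⟩ := this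
    exact ⟨L, hrow, hcol, hdiag⟩
  rcases n with _ | m
  · exact hasIdempotentLatinSquare_of_isEmpty
  rcases Nat.even_or_odd m with heven | hodd
  · exact hasIdempotentLatinSquare_fin_of_odd heven.add_one
  · exact hasIdempotentLatinSquare_fin_succ_of_odd hodd (by omega)

/-- For every positive integer `n ≠ 2`, there exists an idempotent Latin square of
order `n`: a Latin square `L` with `L(i,i) = i` for all `i`. -/
theorem exists_idempotent_latin_square (n : ℕ) (hn : 0 < n) (hn2 : n ≠ 2) :
    ∃ L : Fin n × Fin n → Fin n,
      (∀ i, Function.Bijective fun j => L (i, j)) ∧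
      (∀ j, Function.Bijective fun i => L (i, j)) ∧
      (∀ i, L (i, i) = i) :=
  exists_idempotent_latin_square_general n hn2
end

section
/- Suppose the edge set of a simple graph G is partitioned into subgraphs G₁, ..., G_b such that each Gᵢ admits a triangle decomposition and each Gᵢ admits an assignment of edge multiplicities 0, 1, ..., |E(Gᵢ)|−1 (in some order) for which the resulting multigraph decomposes into triangles. Then G admits an assignment of edge multiplicities 0, 1, ..., |E(G)|−1 (in some order) for which the resulting multigraph decomposes into triangles. -/
open scoped Classical

/-- The multiset of edges of a simple graph on a finite vertex type. -/
noncomputable def edgeMS {V : Type*} [Fintype V] (G : SimpleGraph V) : Multiset (Sym2 V) :=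
  (Finset.univ.filter fun e : Sym2 V => e ∈ G.edgeSet).val

/-- `w` is a member of `Δ_a(G)`: the edge multiplicities `w e`, over the edges of `G`,
are exactly `a, a+1, ..., a + |E(G)| − 1` in some order, and the resulting multigraph
decomposes into triangles of `G` (each triangle contributing 1 to each of its 3 edges). -/
noncomputable def InDelta {V : Type*} [Fintype V] (G : SimpleGraph V) (a : ℕ)
    (w : Sym2 V → ℕ) : Prop :=
  (edgeMS G).map w = (Multiset.range (Multiset.card (edgeMS G))).map (a + ·) ∧
  ∃ T : Multiset (Finset V),
    (∀ t ∈ T, G.IsNClique 3 t) ∧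
    ∀ e ∈ edgeMS G, w e = Multiset.card (T.filter fun t => ∀ v ∈ e, v ∈ t)

/-- The simple graph `G` itself decomposes into triangles (each edge lies in exactly one
triangle of the decomposition). -/
noncomputable def HasTriDecomp {V : Type*} [Fintype V] (G : SimpleGraph V) : Prop :=
  ∃ T : Multiset (Finset V),
    (∀ t ∈ T, G.IsNClique 3 t) ∧
    ∀ e ∈ edgeMS G, Multiset.card (T.filter fun t => ∀ v ∈ e, v ∈ t) = 1

/-!
Shifting every weight of a triangle-decomposable graph by `k` keeps a triangle-decomposable
weighting: add `k` copies of the decomposition. So give the `i`-th part its `Δ₀` weighting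
shifted by the number of edges of the earlier parts; the parts then carry consecutive blocks of
`0, 1, …, |E(G)| − 1`, and since they are edge-disjoint, a triangle of one part never covers an
edge of another, so the triangle multisets of the parts simply add up.
-/

open Function SimpleGraph

section

variable {V : Type*}

lemma SimpleGraph.IsClique.mem_edgeSet_of_forall_mem {H : SimpleGraph V} {t : Set V}
    (ht : H.IsClique t) {e : Sym2 V} (he : ¬e.IsDiag) (het : ∀ v ∈ e, v ∈ t) :
    e ∈ H.edgeSet := by
  induction e with
  | _ u v => exact ht (het u (Sym2.mem_mk_left u v)) (het v (Sym2.mem_mk_right u v)) he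

variable [Fintype V]

lemma mem_edgeMS {G : SimpleGraph V} {e : Sym2 V} : e ∈ edgeMS G ↔ e ∈ G.edgeSet := by
  simp [edgeMS]

lemma edgeMS_sup {G₁ G₂ : SimpleGraph V} (h : Disjoint G₁ G₂) :
    edgeMS (G₁ ⊔ G₂) = edgeMS G₁ + edgeMS G₂ := by
  have hdisj := disjoint_edgeSet.mpr h
  refine (Multiset.Nodup.ext (Finset.nodup _)
    (Multiset.nodup_add.mpr ⟨Finset.nodup _, Finset.nodup _, ?_⟩)).mpr ?_
  · exact Multiset.disjoint_left.mpr fun h₁ h₂ =>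
      hdisj.ne_of_mem (mem_edgeMS.mp h₁) (mem_edgeMS.mp h₂) rfl
  · simp [edgeSet_sup]

lemma card_filter_eq_zero_of_notMem_edgeSet {H : SimpleGraph V} {T : Multiset (Finset V)}
    (hT : ∀ t ∈ T, H.IsNClique 3 t) {e : Sym2 V} (he : ¬e.IsDiag) (hH : e ∉ H.edgeSet) :
    Multiset.card (T.filter fun t => ∀ v ∈ e, v ∈ t) = 0 := by
  rw [Multiset.card_eq_zero, Multiset.filter_eq_nil]
  exact fun t ht het => hH ((hT t ht).isClique.mem_edgeSet_of_forall_mem he het)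

lemma InDelta.add_const {G : SimpleGraph V} {a : ℕ} {w : Sym2 V → ℕ} (hw : InDelta G a w)
    (hG : HasTriDecomp G) (k : ℕ) : InDelta G (a + k) (fun e => w e + k) := by
  obtain ⟨hmap, T, hT, hwT⟩ := hw
  obtain ⟨D, hD, hDe⟩ := hG
  refine ⟨?_, T + k • D, ?_, ?_⟩
  · rw [show (fun e => w e + k) = (· + k) ∘ w from rfl, ← Multiset.map_map, hmap,
      Multiset.map_map]
    exact Multiset.map_congr rfl fun n _ => by simp only [Function.comp_apply]; ring
  · intro t ht
    rcases Multiset.mem_add.mp ht with ht | ht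
    exacts [hT t ht, hD t (Multiset.mem_of_mem_nsmul ht)]
  · intro e he
    rw [Multiset.filter_add, Multiset.card_add, Multiset.filter_nsmul, Multiset.card_nsmul,
      hDe e he, mul_one, ← hwT e he]

lemma InDelta.sup {G₁ G₂ : SimpleGraph V} {a : ℕ} {w₁ w₂ : Sym2 V → ℕ}
    (hw₁ : InDelta G₁ a w₁) (hw₂ : InDelta G₂ (a + Multiset.card (edgeMS G₁)) w₂)
    (h : Disjoint G₁ G₂) :
    InDelta (G₁ ⊔ G₂) a (fun e => if e ∈ G₁.edgeSet then w₁ e else w₂ e) := by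
  obtain ⟨hmap₁, T₁, hT₁, hwT₁⟩ := hw₁
  obtain ⟨hmap₂, T₂, hT₂, hwT₂⟩ := hw₂
  have hnot₁ : ∀ e ∈ edgeMS G₂, e ∉ G₁.edgeSet := fun e he h₁ =>
    (disjoint_edgeSet.mpr h).ne_of_mem h₁ (mem_edgeMS.mp he) rfl
  unfold InDelta
  rw [edgeMS_sup h]
  refine ⟨?_, T₁ + T₂, ?_, ?_⟩
  · rw [Multiset.map_add, Multiset.card_add, Multiset.range_add, Multiset.map_add,
      Multiset.map_map, ← hmap₁]
    congr 1
    · exact Multiset.map_congr rfl fun e he => if_pos (mem_edgeMS.mp he)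
    · rw [Multiset.map_congr rfl fun e he => if_neg (hnot₁ e he), hmap₂]
      exact Multiset.map_congr rfl fun n _ => add_assoc _ _ _
  · intro t ht
    rcases Multiset.mem_add.mp ht with ht | ht
    exacts [(hT₁ t ht).mono le_sup_left, (hT₂ t ht).mono le_sup_right]
  · intro e he
    dsimp only
    rw [Multiset.filter_add, Multiset.card_add]
    rcases Multiset.mem_add.mp he with he | he
    · have he' := mem_edgeMS.mp he
      rw [if_pos he', hwT₁ e he, card_filter_eq_zero_of_notMem_edgeSet hT₂
        (G₁.not_isDiag_of_mem_edgeSet he') fun h₂ => hnot₁ e (mem_edgeMS.mpr h₂) he',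
        add_zero]
    · have he' := mem_edgeMS.mp he
      rw [if_neg (hnot₁ e he), hwT₂ e he, card_filter_eq_zero_of_notMem_edgeSet hT₁
        (G₂.not_isDiag_of_mem_edgeSet he') (hnot₁ e he), zero_add]

lemma exists_inDelta_zero_finset_sup {ι : Type*} {Gs : ι → SimpleGraph V}
    (hdisj : Pairwise (Disjoint on Gs)) (htri : ∀ i, HasTriDecomp (Gs i))
    (hdelta : ∀ i, ∃ w, InDelta (Gs i) 0 w) (s : Finset ι) :
    ∃ w, InDelta (s.sup Gs) 0 w := by
  classical
  induction s using Finset.induction_on with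
  | empty => exact ⟨0, by simp [edgeMS], 0, by simp, by simp [edgeMS]⟩
  | insert j s hj ih =>
    obtain ⟨w, hw⟩ := ih
    obtain ⟨wj, hwj⟩ := hdelta j
    have hdisj_j : Disjoint (s.sup Gs) (Gs j) :=
      Finset.disjoint_sup_left.mpr fun i hi => hdisj (ne_of_mem_of_not_mem hi hj)
    rw [Finset.sup_insert, sup_comm]
    exact ⟨_, hw.sup (hwj.add_const (htri j) _) hdisj_j⟩

end

/-- If the edge set of a simple graph `G` is partitioned into subgraphs `G₁, ..., G_b`,
each of which admits a triangle decomposition and satisfies `Δ₀(Gᵢ) ≠ ∅`, then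
`Δ₀(G) ≠ ∅`. -/
theorem delta_zero_of_edge_decomposition {V : Type*} [Fintype V]
    (G : SimpleGraph V) (b : ℕ) (Gs : Fin b → SimpleGraph V)
    (hsub : ∀ i, Gs i ≤ G)
    (hpart : ∀ u v, G.Adj u v → ∃! i, (Gs i).Adj u v)
    (htri : ∀ i, HasTriDecomp (Gs i))
    (hdelta : ∀ i, ∃ w, InDelta (Gs i) 0 w) :
    ∃ w, InDelta G 0 w := by
  have hG : G = Finset.univ.sup Gs := by
    refine le_antisymm (fun u v huv => ?_) (Finset.sup_le fun i _ => hsub i)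
    obtain ⟨i, hi, -⟩ := hpart u v huv
    exact Finset.le_sup (f := Gs) (Finset.mem_univ i) hi
  have hdisj : Pairwise (Disjoint on Gs) := fun i j hij =>
    disjoint_left.mpr fun u v hi hj => hij ((hpart u v (hsub i hi)).unique hi hj)
  rw [hG]
  exact exists_inDelta_zero_finset_sup hdisj htri hdelta _
end
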